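/- Let φ : [-h,h] → ℝ satisfy φ'' + (λ - q(x))φ = 0 with q ∈ L^∞, φ(0) = 0, φ'(0) = √λ (λ > 0), and let d² ≥ 0. Then | φ'(h)² + (λ - d²)φ(h)² - λ | ≤ 2(‖q‖_∞ + d²) ∫₀ʰ |φ(x)φ'(x)| dx. -/

import Mathlib

/-!
Multiplying `φ'' + (λ - d²) φ = (q - d²) φ` by `2φ'` shows that the modified energy
`φ'² + (λ - d²) φ²` has derivative `2 (q - d²) φ φ'`. Its value at `0` is `λ` by the initial
conditions, so integrating over `(0, h)` and using `|q - d²| ≤ ‖q‖_∞ + d²` gives the estimate.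
-/

open MeasureTheory intervalIntegral

theorem hasDerivAt_energy {φ : ℝ → ℝ} (hφ : ContDiff ℝ 2 φ) (c x : ℝ) :
    HasDerivAt (fun y => deriv φ y ^ 2 + c * φ y ^ 2)
      (2 * deriv φ x * (deriv (deriv φ) x + c * φ x)) x := by
  have hφ₁ : HasDerivAt φ (deriv φ x) x :=
    (hφ.differentiable two_ne_zero x).hasDerivAt
  have hφ₂ : HasDerivAt (deriv φ) (deriv (deriv φ) x) x :=
    ((hφ.deriv' (n := 1)).differentiable one_ne_zero x).hasDerivAt
  refine ((hφ₂.fun_pow 2).add ((hφ₁.fun_pow 2).const_mul c)).congr_deriv ?_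
  norm_num
  ring

theorem energy_sub_energy_eq_integral {φ : ℝ → ℝ} (hφ : ContDiff ℝ 2 φ) (c a b : ℝ) :
    (deriv φ b ^ 2 + c * φ b ^ 2) - (deriv φ a ^ 2 + c * φ a ^ 2)
      = ∫ x in a..b, 2 * deriv φ x * (deriv (deriv φ) x + c * φ x) := by
  have hcont : Continuous fun x => 2 * deriv φ x * (deriv (deriv φ) x + c * φ x) := by
    have hφ₁ : ContDiff ℝ 1 (deriv φ) := hφ.deriv'
    have := hφ₁.continuous_deriv le_rfl
    fun_prop
  exact (integral_eq_sub_of_hasDerivAt (fun x _ => hasDerivAt_energy hφ c x)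
    (hcont.intervalIntegrable a b)).symm

theorem abs_integral_le_mul_integral_abs {f g : ℝ → ℝ} {a b C : ℝ} (hab : a ≤ b)
    (hg : IntervalIntegrable g volume a b) (hfg : ∀ x ∈ Set.Icc a b, |f x| ≤ C * |g x|) :
    |∫ x in a..b, f x| ≤ C * ∫ x in a..b, |g x| := by
  rw [← Real.norm_eq_abs, ← intervalIntegral.integral_const_mul]
  exact norm_integral_le_of_norm_le hab
    (Filter.Eventually.of_forall fun x hx => hfg x (Set.Ioc_subset_Icc_self hx))
    (hg.abs.const_mul C)

/-- Energy identity estimate for the antisymmetric mode `φ_a`: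
`φ(0) = 0`, `φ'(0) = √λ`. -/
theorem stmt_2 (q φ : ℝ → ℝ) (h lam d2 M : ℝ) (hh : 0 < h) (hlam : 0 < lam)
    (hd2 : 0 ≤ d2) (hM : ∀ x ∈ Set.Icc (-h) h, |q x| ≤ M)
    (hφ : ContDiff ℝ 2 φ)
    (hode : ∀ x ∈ Set.Icc (-h) h,
      deriv (deriv φ) x + (lam - q x) * φ x = 0)
    (h0 : φ 0 = 0) (h0' : deriv φ 0 = Real.sqrt lam) :
    |deriv φ h ^ 2 + (lam - d2) * φ h ^ 2 - lam|
      ≤ 2 * (M + d2) * ∫ x in (0:ℝ)..h, |φ x * deriv φ x| := by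
  have henergy := energy_sub_energy_eq_integral hφ (lam - d2) 0 h
  rw [h0, h0', Real.sq_sqrt hlam.le, zero_pow two_ne_zero, mul_zero, add_zero] at henergy
  rw [henergy]
  have hcont : Continuous fun x => φ x * deriv φ x :=
    (hφ.continuous).mul (hφ.continuous_deriv one_le_two)
  refine abs_integral_le_mul_integral_abs hh.le (hcont.intervalIntegrable 0 h) fun x hx => ?_
  have hx' : x ∈ Set.Icc (-h) h := ⟨by linarith [hx.1], hx.2⟩
  have hq : |q x - d2| ≤ M + d2 := by
    have := abs_le.mp (hM x hx')
    exact abs_le.mpr ⟨by linarith, by linarith⟩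
  calc |2 * deriv φ x * (deriv (deriv φ) x + (lam - d2) * φ x)|
      = 2 * |q x - d2| * |φ x * deriv φ x| := by
        rw [show deriv (deriv φ) x = (q x - lam) * φ x by linarith [hode x hx']]
        rw [show 2 * deriv φ x * ((q x - lam) * φ x + (lam - d2) * φ x)
            = 2 * (q x - d2) * (φ x * deriv φ x) by ring, abs_mul, abs_mul, abs_two]
    _ ≤ 2 * (M + d2) * |φ x * deriv φ x| := by gcongr
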